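/- arXiv:1605.01387 — 2 statements merged into one kernel-verified Lean document; each statement's English description precedes it below -/
import Mathlib

section
/- Let k ≥ 2 and N > 4k² + 1. For any k-regular graph G on N vertices and any mixed configuration ξ (0 < n < N cooperators), the critical benefit-to-cost ratio satisfies |(b/c)*_ξ − k| ≤ k(2k+1)/(√(N−1) − 2k), provided the denominator N f̄₁ f̄₀ − k f̄₁₀ − k f̄₁f₀ is positive. In particular, for fixed k, (b/c)*_ξ → k uniformly as N → ∞. -/
open Finset

variable {V : Type*}

/-- Number of cooperators (vertices in state 1). -/
def coopCount [Fintype V] (ξ : V → Bool) : ℕ :=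
  (Finset.univ.filter (fun x => ξ x = true)).card

/-- Fraction of neighbors of `x` in state 1. -/
noncomputable def f1 [Fintype V] (G : SimpleGraph V) [DecidableRel G.Adj]
    (k : ℕ) (ξ : V → Bool) (x : V) : ℝ :=
  (((G.neighborFinset x).filter (fun y => ξ y = true)).card : ℝ) / k

/-- Fraction of neighbors of `x` in state 0. -/
noncomputable def f0 [Fintype V] (G : SimpleGraph V) [DecidableRel G.Adj]
    (k : ℕ) (ξ : V → Bool) (x : V) : ℝ :=
  (((G.neighborFinset x).filter (fun y => ξ y = false)).card : ℝ) / k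

/-- Average over vertices of `f1`. -/
noncomputable def fbar1 [Fintype V] (G : SimpleGraph V) [DecidableRel G.Adj]
    (k : ℕ) (ξ : V → Bool) : ℝ :=
  (∑ x : V, f1 G k ξ x) / (Fintype.card V)

/-- Average over vertices of `f0`. -/
noncomputable def fbar0 [Fintype V] (G : SimpleGraph V) [DecidableRel G.Adj]
    (k : ℕ) (ξ : V → Bool) : ℝ :=
  (∑ x : V, f0 G k ξ x) / (Fintype.card V)

/-- Normalized count of ordered adjacent pairs (y,z) with ξ(y)=1, ξ(z)=0. -/
noncomputable def fbar10 [Fintype V] (G : SimpleGraph V) [DecidableRel G.Adj]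
    (k : ℕ) (ξ : V → Bool) : ℝ :=
  ((∑ y : V, if ξ y = true then
      (((G.neighborFinset y).filter (fun z => ξ z = false)).card : ℝ) else 0)) /
    ((Fintype.card V : ℝ) * k)

/-- Average over vertices of `f1 · f0`. -/
noncomputable def fbar1f0 [Fintype V] (G : SimpleGraph V) [DecidableRel G.Adj]
    (k : ℕ) (ξ : V → Bool) : ℝ :=
  (∑ x : V, f1 G k ξ x * f0 G k ξ x) / (Fintype.card V)

lemma dc [Fintype V] (G : SimpleGraph V) [DecidableRel G.Adj]
    (P Q : V → Prop) [DecidablePred P] [DecidablePred Q] :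
    ∑ y ∈ univ.filter P, ((G.neighborFinset y).filter Q).card
    = ∑ z ∈ univ.filter Q, ((G.neighborFinset z).filter P).card := by
  have key : ∀ (P Q : V → Prop) (_ : DecidablePred P) (_ : DecidablePred Q),
      ∑ y ∈ univ.filter P, ((G.neighborFinset y).filter Q).card
      = ∑ y : V, ∑ z : V, if P y ∧ Q z ∧ G.Adj y z then 1 else 0 := by
    intro P Q hP hQ
    rw [Finset.sum_filter]
    refine Finset.sum_congr rfl fun y _ => ?_
    have h1 : ((G.neighborFinset y).filter Q).card
        = ∑ z : V, if Q z ∧ G.Adj y z then 1 else 0 := by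
      rw [Finset.card_filter, SimpleGraph.neighborFinset_eq_filter, Finset.sum_filter]
      refine Finset.sum_congr rfl fun z _ => ?_
      by_cases h1 : G.Adj y z <;> by_cases h2 : Q z <;> simp [h1, h2]
    rw [h1]
    by_cases hy : P y
    · simp [hy]
    · simp [hy]
  rw [key P Q inferInstance inferInstance, key Q P inferInstance inferInstance,
    Finset.sum_comm]
  refine Finset.sum_congr rfl fun z _ => Finset.sum_congr rfl fun y _ => ?_
  refine if_congr ?_ rfl rfl
  constructor
  · rintro ⟨h1, h2, h3⟩; exact ⟨h2, h1, h3.symm⟩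
  · rintro ⟨h1, h2, h3⟩; exact ⟨h2, h1, h3.symm⟩


lemma core (k B C s d D : ℝ) (hk : 2 ≤ k) (hB0 : 0 ≤ B) (hC0 : 0 ≤ C)
    (hBs : B ≤ s) (hCs : C ≤ s) (hs0 : 0 ≤ s) (hd : 0 < d) (hsd : s * d ≤ D)
    (hD : 0 < D) :
    |k * (D + (k - 1) * B + k * C) / D - k| ≤ k * (2 * k + 1) / d := by
  have hkR : (0:ℝ) < k := by linarith
  have hexpr : k * (D + (k - 1) * B + k * C) / D - k
      = (k * ((k - 1) * B + k * C)) / D := by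
    field_simp
    ring
  rw [hexpr]
  have hnum0 : 0 ≤ k * ((k - 1) * B + k * C) := by
    apply mul_nonneg hkR.le
    nlinarith [mul_nonneg (by linarith : (0:ℝ) ≤ k - 1) hB0, mul_nonneg hkR.le hC0]
  rw [abs_of_nonneg (div_nonneg hnum0 hD.le)]
  rw [div_le_div_iff₀ hD hd]
  have key : k * ((k - 1) * B + k * C) ≤ k * (2 * k - 1) * s := by
    have h1 : (k - 1) * B ≤ (k - 1) * s :=
      mul_le_mul_of_nonneg_left hBs (by linarith)
    have h2 : k * C ≤ k * s := mul_le_mul_of_nonneg_left hCs hkR.le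
    nlinarith
  calc k * ((k - 1) * B + k * C) * d
      ≤ (k * (2 * k - 1) * s) * d := mul_le_mul_of_nonneg_right key hd.le
    _ = k * (2 * k - 1) * (s * d) := by ring
    _ ≤ k * (2 * k - 1) * D := by
        apply mul_le_mul_of_nonneg_left hsd
        nlinarith
    _ ≤ k * (2 * k + 1) * D := by nlinarith

lemma endgame (k N n B C : ℝ) (hk : 2 ≤ k) (hbig : 4 * k ^ 2 + 1 < N)
    (hn1 : 1 ≤ n) (hnN : n ≤ N - 1)
    (hB0 : 0 ≤ B) (hBa : B ≤ n / N) (hBb : B ≤ (N - n) / N)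
    (hC0 : 0 ≤ C) (hCa : C ≤ n / N) (hCb : C ≤ (N - n) / N)
    (hden : 0 < N * (n / N) * ((N - n) / N) - k * B - k * C) :
    |k * (N * (n / N) * ((N - n) / N) - B) /
        (N * (n / N) * ((N - n) / N) - k * B - k * C) - k|
      ≤ k * (2 * k + 1) / (Real.sqrt (N - 1) - 2 * k) := by
  have hkR : (0:ℝ) < k := by linarith
  have hNR : (0:ℝ) < N := by nlinarith
  have hnR : (0:ℝ) < n := by linarith
  have hprod_nn : (0:ℝ) ≤ n * (N - n) := by nlinarith
  set s : ℝ := Real.sqrt (n * (N - n)) / N with hsdef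
  have hs0 : 0 ≤ s := by positivity
  have hs2 : s ^ 2 = (n / N) * ((N - n) / N) := by
    rw [hsdef, div_pow, Real.sq_sqrt hprod_nn, div_mul_div_comm, sq]
  have hab : N * (n / N) * ((N - n) / N) = N * s ^ 2 := by rw [hs2]; ring
  have hBs : B ≤ s := by
    have h2 : B ^ 2 ≤ s ^ 2 := by
      rw [hs2]
      have h1 : 0 ≤ n / N := by positivity
      have h2 : 0 ≤ (N - n) / N := by apply div_nonneg (by linarith) hNR.le
      nlinarith
    nlinarith
  have hCs : C ≤ s := by
    have h2 : C ^ 2 ≤ s ^ 2 := by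
      rw [hs2]
      have h1 : 0 ≤ n / N := by positivity
      have h2 : 0 ≤ (N - n) / N := by apply div_nonneg (by linarith) hNR.le
      nlinarith
    nlinarith
  have hNs : Real.sqrt (N - 1) ≤ N * s := by
    have h1 : N * s = Real.sqrt (n * (N - n)) := by
      rw [hsdef, mul_div_assoc', mul_comm N _, mul_div_assoc, div_self (ne_of_gt hNR),
        mul_one]
    rw [h1]
    apply Real.sqrt_le_sqrt
    nlinarith [mul_nonneg (sub_nonneg.2 hn1) (sub_nonneg.2 hnN)]
  have hd : (0:ℝ) < Real.sqrt (N - 1) - 2 * k := by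
    have h4 : (2 * k) ^ 2 < N - 1 := by nlinarith
    have h5 : Real.sqrt ((2 * k) ^ 2) < Real.sqrt (N - 1) :=
      Real.sqrt_lt_sqrt (by positivity) h4
    rw [Real.sqrt_sq (by positivity)] at h5
    linarith
  have hsd : s * (Real.sqrt (N - 1) - 2 * k)
      ≤ N * (n / N) * ((N - n) / N) - k * B - k * C := by
    have h1 : s * (Real.sqrt (N - 1) - 2 * k) ≤ s * (N * s - 2 * k) := by
      apply mul_le_mul_of_nonneg_left _ hs0
      linarith
    have hkB : k * B ≤ k * s := mul_le_mul_of_nonneg_left hBs hkR.le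
    have hkC : k * C ≤ k * s := mul_le_mul_of_nonneg_left hCs hkR.le
    have h4 : s * (N * s - 2 * k) = N * s ^ 2 - k * s - k * s := by ring
    rw [hab]
    linarith
  have hE : N * (n / N) * ((N - n) / N) - B
      = (N * (n / N) * ((N - n) / N) - k * B - k * C) + (k - 1) * B + k * C := by
    ring
  rw [hE]
  exact core k B C s (Real.sqrt (N - 1) - 2 * k) _ hk hB0 hC0 hBs hCs hs0 hd hsd hden


set_option maxHeartbeats 1000000 in
theorem stmt10 [Fintype V] [DecidableEq V] (G : SimpleGraph V) [DecidableRel G.Adj]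
    (k N : ℕ) (hk : 2 ≤ k) (hreg : ∀ v : V, G.degree v = k)
    (hN : Fintype.card V = N) (hbig : 4 * k ^ 2 + 1 < N)
    (ξ : V → Bool) (n : ℕ) (hn : coopCount ξ = n)
    (hn0 : 0 < n) (hnN : n < N)
    (hden : 0 < (N : ℝ) * fbar1 G k ξ * fbar0 G k ξ - k * fbar10 G k ξ
      - k * fbar1f0 G k ξ) :
    |(k : ℝ) * ((N : ℝ) * fbar1 G k ξ * fbar0 G k ξ - fbar10 G k ξ) /
        ((N : ℝ) * fbar1 G k ξ * fbar0 G k ξ - k * fbar10 G k ξ - k * fbar1f0 G k ξ)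
      - k|
      ≤ (k : ℝ) * (2 * k + 1) / (Real.sqrt ((N : ℝ) - 1) - 2 * k) := by
  have hk0 : 0 < k := by omega
  have hkR : (0:ℝ) < k := by exact_mod_cast hk0
  have hN0 : 0 < N := by omega
  have hNR : (0:ℝ) < N := by exact_mod_cast hN0
  have hnR : (0:ℝ) < n := by exact_mod_cast hn0
  have hn1 : (1:ℝ) ≤ n := by exact_mod_cast hn0
  have hnN1 : (n:ℝ) ≤ (N:ℝ) - 1 := by
    have : n + 1 ≤ N := hnN
    have := (Nat.cast_le (α := ℝ)).2 this
    push_cast at this; linarith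
  -- cardinality of the defector set
  have hcard0 : (univ.filter (fun x => ξ x = false)).card = N - n := by
    have h := Finset.card_filter_add_card_filter_not
      (s := (univ : Finset V)) (p := fun x => ξ x = true)
    have he : univ.filter (fun x => ¬ (ξ x = true)) = univ.filter (fun x => ξ x = false) := by
      apply Finset.filter_congr; intro x _; simp
    rw [he] at h
    have : coopCount ξ + (univ.filter (fun x => ξ x = false)).card = N := by
      unfold coopCount; rw [h, Finset.card_univ, hN]
    omega
  -- vertex-wise counts
  have hcount1 : ∀ x : V, (((G.neighborFinset x).filter (fun y => ξ y = true)).card) ≤ k := by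
    intro x
    calc ((G.neighborFinset x).filter (fun y => ξ y = true)).card
        ≤ (G.neighborFinset x).card := Finset.card_filter_le _ _
      _ = k := by rw [SimpleGraph.card_neighborFinset_eq_degree, hreg]
  have hcount0 : ∀ x : V, (((G.neighborFinset x).filter (fun y => ξ y = false)).card) ≤ k := by
    intro x
    calc ((G.neighborFinset x).filter (fun y => ξ y = false)).card
        ≤ (G.neighborFinset x).card := Finset.card_filter_le _ _
      _ = k := by rw [SimpleGraph.card_neighborFinset_eq_degree, hreg]
  -- sums of f1 and f0
  have hsumcount1 : ∑ x : V, (((G.neighborFinset x).filter (fun y => ξ y = true)).card) = n * k := by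
    have h := dc G (fun _ => True) (fun y => ξ y = true)
    simp only [Finset.filter_true] at h
    rw [h]
    calc ∑ x ∈ univ.filter (fun y => ξ y = true), (G.neighborFinset x).card
        = ∑ _x ∈ univ.filter (fun y => ξ y = true), k :=
          Finset.sum_congr rfl fun x _ => by
            rw [SimpleGraph.card_neighborFinset_eq_degree, hreg]
      _ = n * k := by rw [Finset.sum_const, smul_eq_mul,
          show (univ.filter (fun y => ξ y = true)).card = n from hn]
  have hsumcount0 : ∑ x : V, (((G.neighborFinset x).filter (fun y => ξ y = false)).card) = (N - n) * k := by
    have h := dc G (fun _ => True) (fun y => ξ y = false)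
    simp only [Finset.filter_true] at h
    rw [h]
    calc ∑ x ∈ univ.filter (fun y => ξ y = false), (G.neighborFinset x).card
        = ∑ _x ∈ univ.filter (fun y => ξ y = false), k :=
          Finset.sum_congr rfl fun x _ => by
            rw [SimpleGraph.card_neighborFinset_eq_degree, hreg]
      _ = (N - n) * k := by rw [Finset.sum_const, smul_eq_mul, hcard0]
  have ha : fbar1 G k ξ = (n : ℝ) / N := by
    unfold fbar1 f1
    rw [← Finset.sum_div, hN]
    have : ∑ x : V, ((((G.neighborFinset x).filter (fun y => ξ y = true)).card : ℝ))
        = (n : ℝ) * k := by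
      rw [← Nat.cast_sum, hsumcount1]; push_cast; ring
    rw [this]
    field_simp
  have hb : fbar0 G k ξ = ((N : ℝ) - n) / N := by
    unfold fbar0 f0
    rw [← Finset.sum_div, hN]
    have : ∑ x : V, ((((G.neighborFinset x).filter (fun y => ξ y = false)).card : ℝ))
        = ((N : ℝ) - n) * k := by
      rw [← Nat.cast_sum, hsumcount0]
      have : ((N - n : ℕ) : ℝ) = (N : ℝ) - n := by
        have : n ≤ N := hnN.le
        push_cast [this]; ring
      push_cast
      rw [Nat.cast_sub hnN.le]
    rw [this]
    field_simp
  -- bounds on fbar10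
  have hT : ∑ y : V, (if ξ y = true then
        (((G.neighborFinset y).filter (fun z => ξ z = false)).card : ℝ) else 0)
      = ((∑ y ∈ univ.filter (fun y => ξ y = true),
          ((G.neighborFinset y).filter (fun z => ξ z = false)).card : ℕ) : ℝ) := by
    rw [Nat.cast_sum, Finset.sum_filter]
  have hTle1 : (∑ y ∈ univ.filter (fun y => ξ y = true),
      ((G.neighborFinset y).filter (fun z => ξ z = false)).card) ≤ n * k := by
    calc (∑ y ∈ univ.filter (fun y => ξ y = true),
        ((G.neighborFinset y).filter (fun z => ξ z = false)).card)
        ≤ ∑ _y ∈ univ.filter (fun y => ξ y = true), k :=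
          Finset.sum_le_sum (fun y _ => hcount0 y)
      _ = n * k := by rw [Finset.sum_const, smul_eq_mul,
          show (univ.filter (fun y => ξ y = true)).card = n from hn]
  have hTle0 : (∑ y ∈ univ.filter (fun y => ξ y = true),
      ((G.neighborFinset y).filter (fun z => ξ z = false)).card) ≤ (N - n) * k := by
    rw [dc G (fun y => ξ y = true) (fun z => ξ z = false)]
    calc (∑ z ∈ univ.filter (fun z => ξ z = false),
        ((G.neighborFinset z).filter (fun y => ξ y = true)).card)
        ≤ ∑ _z ∈ univ.filter (fun z => ξ z = false), k :=
          Finset.sum_le_sum (fun z _ => hcount1 z)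
      _ = (N - n) * k := by rw [Finset.sum_const, smul_eq_mul, hcard0]
  have hB0 : 0 ≤ fbar10 G k ξ := by
    unfold fbar10
    apply div_nonneg
    · apply Finset.sum_nonneg; intro y _; split <;> positivity
    · positivity
  have hBa : fbar10 G k ξ ≤ (n : ℝ) / N := by
    unfold fbar10
    rw [hT, hN, div_le_div_iff₀ (by positivity) hNR]
    have : ((∑ y ∈ univ.filter (fun y => ξ y = true),
        ((G.neighborFinset y).filter (fun z => ξ z = false)).card : ℕ) : ℝ) ≤ (n : ℝ) * k := by
      exact_mod_cast hTle1
    nlinarith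
  have hBb : fbar10 G k ξ ≤ ((N : ℝ) - n) / N := by
    unfold fbar10
    rw [hT, hN, div_le_div_iff₀ (by positivity) hNR]
    have h1 : ((∑ y ∈ univ.filter (fun y => ξ y = true),
        ((G.neighborFinset y).filter (fun z => ξ z = false)).card : ℕ) : ℝ)
        ≤ ((N : ℝ) - n) * k := by
      have := (Nat.cast_le (α := ℝ)).2 hTle0
      push_cast [Nat.cast_sub hnN.le] at this
      push_cast
      linarith
    nlinarith
  -- bounds on fbar1f0
  have hf1nn : ∀ x, 0 ≤ f1 G k ξ x := by intro x; unfold f1; positivity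
  have hf0nn : ∀ x, 0 ≤ f0 G k ξ x := by intro x; unfold f0; positivity
  have hf1le : ∀ x, f1 G k ξ x ≤ 1 := by
    intro x; unfold f1
    rw [div_le_one hkR]
    exact_mod_cast hcount1 x
  have hf0le : ∀ x, f0 G k ξ x ≤ 1 := by
    intro x; unfold f0
    rw [div_le_one hkR]
    exact_mod_cast hcount0 x
  have hC0 : 0 ≤ fbar1f0 G k ξ := by
    unfold fbar1f0
    apply div_nonneg _ (by positivity)
    exact Finset.sum_nonneg fun x _ => mul_nonneg (hf1nn x) (hf0nn x)
  have hCa : fbar1f0 G k ξ ≤ fbar1 G k ξ := by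
    unfold fbar1f0 fbar1
    gcongr ?_ / _
    exact Finset.sum_le_sum fun x _ => by nlinarith [hf1nn x, hf0le x, hf0nn x]
  have hCb : fbar1f0 G k ξ ≤ fbar0 G k ξ := by
    unfold fbar1f0 fbar0
    gcongr ?_ / _
    exact Finset.sum_le_sum fun x _ => by nlinarith [hf1nn x, hf1le x, hf0nn x]
  have hCb : fbar1f0 G k ξ ≤ fbar0 G k ξ := by
    unfold fbar1f0 fbar0
    gcongr ?_ / _
    exact Finset.sum_le_sum fun x _ => by nlinarith [hf1nn x, hf1le x, hf0nn x]
  rw [ha, hb] at hden ⊢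
  exact endgame k N n (fbar10 G k ξ) (fbar1f0 G k ξ)
    (by exact_mod_cast hk) (by push_cast; exact_mod_cast hbig) hn1 hnN1
    hB0 hBa hBb hC0 (ha ▸ hCa) (hb ▸ hCb) hden
end

section
/- Let N > 2k ≥ 4 and suppose a configuration ξ on a k-regular graph on N vertices has exactly n cooperators, with f̄₁₀(ξ) ≤ n/N and f̄₁f₀(ξ) ≤ n(k−1)/(Nk) (which always hold). If 1 ≤ n ≤ N − 2k + 1, then the denominator of the critical ratio satisfies N f̄₁ f̄₀(ξ) − k f̄₁₀(ξ) − k f̄₁f₀(ξ) ≥ n(N − n − 2k + 1)/N, which is > 0 when n ≤ N − 2k and ≥ 0 when n = N − 2k + 1. -/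
open Finset

variable {V : Type*}


lemma sum_nbr_card [Fintype V] [DecidableEq V] (G : SimpleGraph V) [DecidableRel G.Adj]
    (p : V → Prop) [DecidablePred p] :
    ∑ x : V, ((G.neighborFinset x).filter p).card
      = ∑ y ∈ univ.filter p, G.degree y := by
  have h1 : ∀ x : V, ((G.neighborFinset x).filter p).card
      = ∑ y : V, if G.Adj x y ∧ p y then 1 else 0 := by
    intro x
    rw [SimpleGraph.neighborFinset_eq_filter, Finset.filter_filter, Finset.card_filter]
  simp only [h1]
  rw [Finset.sum_comm]
  rw [Finset.sum_filter]
  refine Finset.sum_congr rfl fun y _ => ?_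
  by_cases hp : p y
  · simp only [hp, and_true, if_true]
    have : ∀ x : V, G.Adj x y ↔ G.Adj y x := fun x => G.adj_comm x y
    rw [Finset.sum_congr rfl fun x _ => by rw [if_congr (this x) rfl rfl]]
    rw [← Finset.card_filter]
    rw [SimpleGraph.degree, SimpleGraph.neighborFinset_eq_filter]
  · simp [hp]


theorem stmt14 [Fintype V] [DecidableEq V] (G : SimpleGraph V) [DecidableRel G.Adj]
    (k N n : ℕ) (hk : 2 ≤ k) (hreg : ∀ v : V, G.degree v = k)
    (hN : Fintype.card V = N) (hNk : 2 * k < N)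
    (ξ : V → Bool) (hn : coopCount ξ = n)
    (hn1 : 1 ≤ n) (hn2 : n ≤ N - 2 * k + 1) :
    (N : ℝ) * fbar1 G k ξ * fbar0 G k ξ - k * fbar10 G k ξ - k * fbar1f0 G k ξ
        ≥ (n : ℝ) * ((N : ℝ) - n - 2 * k + 1) / N ∧
    (n ≤ N - 2 * k →
      0 < (N : ℝ) * fbar1 G k ξ * fbar0 G k ξ - k * fbar10 G k ξ
        - k * fbar1f0 G k ξ) ∧
    (n = N - 2 * k + 1 →
      0 ≤ (N : ℝ) * fbar1 G k ξ * fbar0 G k ξ - k * fbar10 G k ξ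
        - k * fbar1f0 G k ξ) := by
  classical
  set A : V → ℕ := fun x => ((G.neighborFinset x).filter (fun y => ξ y = true)).card with hA
  set B : V → ℕ := fun x => ((G.neighborFinset x).filter (fun y => ξ y = false)).card with hB
  have hABx : ∀ x, A x + B x = k := by
    intro x
    have := Finset.card_filter_add_card_filter_not
      (s := G.neighborFinset x) (p := fun y => ξ y = true)
    simp only [Bool.not_eq_true] at this
    simpa [hA, hB, hreg x] using this.trans (by rw [SimpleGraph.card_neighborFinset_eq_degree, hreg x])
  set m : ℕ := (Finset.univ.filter (fun y => ξ y = false)).card with hmdef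
  have hnm : n + m = N := by
    have := Finset.card_filter_add_card_filter_not
      (s := (Finset.univ : Finset V)) (p := fun y => ξ y = true)
    simp only [Bool.not_eq_true] at this
    rw [Finset.card_univ, hN] at this
    rw [← hn]; exact this
  have hSA : ∑ x : V, A x = n * k := by
    rw [sum_nbr_card G (fun y => ξ y = true)]
    rw [Finset.sum_congr rfl (fun y _ => hreg y), Finset.sum_const, smul_eq_mul]
    rw [← hn]; rfl
  have hS10 : (∑ y : V, if ξ y = true then B y else 0) ≤ n * k := by
    rw [← Finset.sum_filter]
    calc ∑ y ∈ univ.filter (fun y => ξ y = true), B y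
        ≤ ∑ y ∈ univ.filter (fun y => ξ y = true), k := by
          refine Finset.sum_le_sum fun y _ => ?_
          rw [← hABx y]; omega
      _ = n * k := by rw [Finset.sum_const, smul_eq_mul, ← hn]; rfl
  have hP : ∑ x : V, A x * B x ≤ n * k * (k - 1) := by
    calc ∑ x : V, A x * B x ≤ ∑ x : V, A x * (k - 1) := by
          refine Finset.sum_le_sum fun x _ => ?_
          rcases Nat.eq_zero_or_pos (A x) with h | h
          · simp [h]
          · have : B x ≤ k - 1 := by have := hABx x; omega
            exact Nat.mul_le_mul_left _ this
      _ = n * k * (k - 1) := by rw [← Finset.sum_mul, hSA]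
  -- real facts
  have hk0 : (0:ℝ) < k := by positivity
  have hNn : 0 < N := by omega
  have hN0 : (0:ℝ) < N := by exact_mod_cast hNn
  have hNV : (Fintype.card V : ℝ) = N := by exact_mod_cast hN
  have hf1 : fbar1 G k ξ = (n : ℝ) / N := by
    unfold fbar1 f1
    rw [← Finset.sum_div, hNV]
    have : ∑ x : V, (A x : ℝ) = (n : ℝ) * k := by
      rw [← Nat.cast_sum, hSA]; push_cast; ring
    rw [show (∑ x : V, ((((G.neighborFinset x).filter (fun y => ξ y = true)).card : ℝ))) = ∑ x : V, (A x : ℝ) from rfl, this]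
    field_simp
  have hf0 : fbar0 G k ξ = (m : ℝ) / N := by
    unfold fbar0 f0
    rw [← Finset.sum_div, hNV]
    have hSB : ∑ x : V, B x = m * k := by
      rw [hB, sum_nbr_card G (fun y => ξ y = false)]
      rw [Finset.sum_congr rfl (fun y _ => hreg y), Finset.sum_const, smul_eq_mul, hmdef]
    have : ∑ x : V, (B x : ℝ) = (m : ℝ) * k := by
      rw [← Nat.cast_sum, hSB]; push_cast; ring
    rw [show (∑ x : V, ((((G.neighborFinset x).filter (fun y => ξ y = false)).card : ℝ))) = ∑ x : V, (B x : ℝ) from rfl, this]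
    field_simp
  have hf10 : fbar10 G k ξ ≤ (n : ℝ) / N := by
    unfold fbar10
    rw [hNV]
    rw [div_le_div_iff₀ (by positivity) hN0]
    have h1 : (∑ y : V, if ξ y = true then ((((G.neighborFinset y).filter (fun z => ξ z = false)).card : ℝ)) else 0)
        = ((∑ y : V, if ξ y = true then B y else 0 : ℕ) : ℝ) := by
      rw [Nat.cast_sum]
      refine Finset.sum_congr rfl fun y _ => ?_
      split <;> simp [hB]
    rw [h1]
    have : ((∑ y : V, if ξ y = true then B y else 0 : ℕ) : ℝ) ≤ ((n * k : ℕ) : ℝ) := by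
      exact_mod_cast hS10
    calc ((∑ y : V, if ξ y = true then B y else 0 : ℕ) : ℝ) * N ≤ ((n*k:ℕ):ℝ) * N := by
          exact mul_le_mul_of_nonneg_right this hN0.le
      _ = (n:ℝ) * (N * k) := by push_cast; ring
  have hf1f0 : fbar1f0 G k ξ ≤ (n : ℝ) * ((k:ℝ) - 1) / (N * k) := by
    unfold fbar1f0 f1 f0
    rw [hNV]
    have h1 : ∑ x : V, (((A x : ℝ)) / k) * ((B x : ℝ) / k)
        = ((∑ x : V, A x * B x : ℕ) : ℝ) / (k * k) := by
      rw [Nat.cast_sum, Finset.sum_div]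
      refine Finset.sum_congr rfl fun x _ => ?_
      push_cast; ring
    rw [show (∑ x : V, ((((G.neighborFinset x).filter (fun y => ξ y = true)).card : ℝ) / k) * ((((G.neighborFinset x).filter (fun y => ξ y = false)).card : ℝ) / k)) = ∑ x : V, (((A x : ℝ)) / k) * ((B x : ℝ) / k) from rfl, h1]
    have hPr : ((∑ x : V, A x * B x : ℕ) : ℝ) ≤ (n : ℝ) * k * ((k:ℝ) - 1) := by
      have := hP
      have hk1 : (1:ℕ) ≤ k := by omega
      have : ((∑ x : V, A x * B x : ℕ) : ℝ) ≤ ((n * k * (k-1) : ℕ) : ℝ) := by exact_mod_cast hP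
      refine this.trans_eq ?_
      push_cast [Nat.cast_sub hk1]; ring
    rw [div_div, div_le_div_iff₀ (by positivity) (by positivity)]
    calc ((∑ x : V, A x * B x : ℕ) : ℝ) * (N * k) ≤ ((n:ℝ) * k * ((k:ℝ)-1)) * (N * k) :=
          mul_le_mul_of_nonneg_right hPr (by positivity)
      _ = (n:ℝ) * ((k:ℝ)-1) * (k * k * N) := by ring
  have hmR : (m : ℝ) = (N : ℝ) - n := by
    have : (n:ℝ) + m = N := by exact_mod_cast hnm
    linarith
  have key : (N : ℝ) * fbar1 G k ξ * fbar0 G k ξ - k * fbar10 G k ξ - k * fbar1f0 G k ξ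
      ≥ (n : ℝ) * ((N : ℝ) - n - 2 * k + 1) / N := by
    rw [hf1, hf0]
    have e1 : (N:ℝ) * ((n:ℝ)/N) * ((m:ℝ)/N) = (n:ℝ) * ((N:ℝ) - n) / N := by
      rw [hmR]; field_simp
    rw [e1]
    have b1 : (k:ℝ) * fbar10 G k ξ ≤ (k:ℝ) * ((n:ℝ)/N) := by
      exact mul_le_mul_of_nonneg_left hf10 hk0.le
    have b2 : (k:ℝ) * fbar1f0 G k ξ ≤ (k:ℝ) * ((n:ℝ) * ((k:ℝ)-1) / (N * k)) := by
      exact mul_le_mul_of_nonneg_left hf1f0 hk0.le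
    have e2 : (k:ℝ) * ((n:ℝ) * ((k:ℝ)-1) / (N * k)) = (n:ℝ) * ((k:ℝ)-1) / N := by
      field_simp
    rw [e2] at b2
    have e3 : (n:ℝ) * ((N:ℝ) - n) / N - (k:ℝ) * ((n:ℝ)/N) - (n:ℝ) * ((k:ℝ)-1) / N
        = (n : ℝ) * ((N : ℝ) - n - 2 * k + 1) / N := by
      field_simp
      ring
    linarith
  refine ⟨key, fun h2 => ?_, fun h3 => ?_⟩
  · have hle : (n:ℝ) + 2 * k ≤ N := by
      have : n + 2 * k ≤ N := by omega
      exact_mod_cast this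
    have hpos : 0 < (n : ℝ) * ((N : ℝ) - n - 2 * k + 1) / N := by
      apply div_pos _ hN0
      apply mul_pos
      · exact_mod_cast hn1
      · linarith
    linarith
  · have hcast : (n : ℝ) = (N:ℝ) - 2 * k + 1 := by
      have hN2k : 2 * k ≤ N := by omega
      rw [h3]; push_cast [Nat.cast_sub hN2k]; ring
    have : (n : ℝ) * ((N : ℝ) - n - 2 * k + 1) / N = 0 := by
      rw [hcast]; ring_nf
    linarith
end
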